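/- arXiv:2305.03203 — 5 statements merged into one kernel-verified Lean document; each statement's English description precedes it below -/
import Mathlib

section
/- Let X_1,...,X_n be i.i.d. random variables supported on [0,1], and for 1 ≤ s ≤ n-1 let Y_s and Y_{s+1} denote the s-th and (s+1)-th order statistics (in increasing order). Then E[Y_{s+1} - Y_s] ≤ C(n,s) · (s/n)^s · (1 - s/n)^{n-s}. -/
open MeasureTheory ProbabilityTheory
open scoped ENNReal

/-! Write `N(t)` for the number of `X_i` that are `≤ t`. Then `Y_s ≤ t < Y_{s+1}` exactly when
`N(t) = s`, so by Tonelli `E[Y_{s+1} - Y_s] = ∫₀¹ P(N(t) = s) dt`. For each `t`, `N(t)` is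
binomial with parameters `n` and `F(t) = P(X_1 ≤ t)`, and `p ↦ p^s (1-p)^(n-s)` is maximal at
`p = s/n` (weighted AM-GM). -/

/-- The `s`-th order statistic (s-th smallest, 1-indexed) of the values `v`. -/
noncomputable def orderStat {n : ℕ} (v : Fin n → ℝ) (s : ℕ) : ℝ :=
  (List.insertionSort (· ≤ ·) (List.ofFn v)).getD (s - 1) 0

theorem List.Pairwise.getElem_le_iff_lt_countP {α : Type*} [LinearOrder α] {l : List α}
    (hl : l.Pairwise (· ≤ ·)) {i : ℕ} (hi : i < l.length) (t : α) :
    l[i] ≤ t ↔ i < l.countP (· ≤ t) := by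
  induction l generalizing i with
  | nil => simp at hi
  | cons a l ih =>
    rw [List.pairwise_cons] at hl
    by_cases hat : a ≤ t
    · cases i with
      | zero => simp [hat]
      | succ i => simpa [hat] using ih hl.2 (by simpa using hi)
    · have hcount : l.countP (· ≤ t) = 0 :=
        List.countP_eq_zero.2 fun x hx => by simpa using fun hxt => hat ((hl.1 x hx).trans hxt)
      have ha : a ≤ (a :: l)[i] := by
        cases i with
        | zero => rfl
        | succ i => exact hl.1 _ (List.getElem_mem _)
      simp only [List.countP_cons, hcount, hat]
      simpa using fun h => hat (ha.trans h)

noncomputable def countLE {ι : Type*} [Fintype ι] (v : ι → ℝ) (t : ℝ) : ℕ :=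
  (Finset.univ.filter fun i => v i ≤ t).card

theorem countP_ofFn_le_eq_countLE {n : ℕ} (v : Fin n → ℝ) (t : ℝ) :
    (List.ofFn v).countP (· ≤ t) = countLE v t := by
  rw [← Multiset.coe_countP, ← Fin.univ_val_map, Multiset.countP_map]
  rfl

section OrderStat

variable {n : ℕ} (v : Fin n → ℝ)

theorem orderStat_eq_getElem {k : ℕ} (hk : k - 1 < n) :
    orderStat v k = (List.insertionSort (· ≤ ·) (List.ofFn v))[k - 1]'(by simpa using hk) :=
  List.getD_eq_getElem _ _ _

theorem orderStat_le_iff {k : ℕ} (hk1 : 1 ≤ k) (hkn : k ≤ n) (t : ℝ) :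
    orderStat v k ≤ t ↔ k ≤ countLE v t := by
  rw [orderStat_eq_getElem v (by omega),
    (List.pairwise_insertionSort _ _).getElem_le_iff_lt_countP,
    (List.perm_insertionSort _ _).countP_eq, countP_ofFn_le_eq_countLE]
  omega

theorem orderStat_mem_range {k : ℕ} (hk1 : 1 ≤ k) (hkn : k ≤ n) :
    orderStat v k ∈ Set.range v := by
  rw [← List.mem_ofFn', ← List.mem_insertionSort (· ≤ ·), orderStat_eq_getElem v (by omega)]
  exact List.getElem_mem _

theorem orderStat_le_orderStat_succ {k : ℕ} (hk1 : 1 ≤ k) (hkn : k + 1 ≤ n) :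
    orderStat v k ≤ orderStat v (k + 1) := by
  rw [orderStat_le_iff v hk1 (by omega)]
  exact Nat.le_of_succ_le ((orderStat_le_iff v (by omega) hkn _).1 le_rfl)

theorem countLE_eq_iff {s : ℕ} (hs1 : 1 ≤ s) (hsn : s + 1 ≤ n) (t : ℝ) :
    countLE v t = s ↔ t ∈ Set.Ico (orderStat v s) (orderStat v (s + 1)) := by
  rw [Set.mem_Ico, orderStat_le_iff v hs1 (by omega), ← not_le, orderStat_le_iff v (by omega) hsn]
  omega

end OrderStat

theorem pow_mul_one_sub_pow_le {n s : ℕ} (hs : 0 < s) (hsn : s < n) {x : ℝ} (hx0 : 0 ≤ x)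
    (hx1 : x ≤ 1) :
    x ^ s * (1 - x) ^ (n - s) ≤ ((s : ℝ) / n) ^ s * (1 - (s : ℝ) / n) ^ (n - s) := by
  set w : ℝ := s / n
  have hn : (0 : ℝ) < n := Nat.cast_pos.2 (hs.trans hsn)
  have hw0 : 0 < w := div_pos (by exact_mod_cast hs) hn
  have hw1 : 0 < 1 - w := sub_pos.2 ((div_lt_one hn).2 (by exact_mod_cast hsn))
  have hws : w * n = s := div_mul_cancel₀ _ hn.ne'
  have hwns : (1 - w) * n = (n - s : ℕ) := by rw [Nat.cast_sub hsn.le, sub_mul, hws, one_mul]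
  obtain ⟨a, ha, rfl⟩ : ∃ a, 0 ≤ a ∧ w * a = x :=
    ⟨x / w, by positivity, by field_simp⟩
  obtain ⟨b, hb, hb'⟩ : ∃ b, 0 ≤ b ∧ (1 - w) * b = 1 - w * a :=
    ⟨(1 - w * a) / (1 - w), div_nonneg (by linarith) hw1.le, by field_simp⟩
  -- weighted AM-GM for the weights `w, 1 - w`, whose weighted mean of `a, b` is `x + (1 - x) = 1`
  have amgm : a ^ w * b ^ (1 - w) ≤ 1 :=
    (Real.geom_mean_le_arith_mean2_weighted hw0.le hw1.le ha hb (by ring)).trans (by linarith)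
  have hab : a ^ s * b ^ (n - s) ≤ 1 := by
    have := pow_le_one₀ (n := n) (by positivity) amgm
    rwa [mul_pow, ← Real.rpow_mul_natCast ha, ← Real.rpow_mul_natCast hb, hws, hwns,
      Real.rpow_natCast, Real.rpow_natCast] at this
  calc (w * a) ^ s * (1 - w * a) ^ (n - s)
        = w ^ s * (1 - w) ^ (n - s) * (a ^ s * b ^ (n - s)) := by
          rw [← hb', mul_pow, mul_pow]; ring
    _ ≤ w ^ s * (1 - w) ^ (n - s) := mul_le_of_le_one_right (by positivity) hab

theorem ENNReal.pow_mul_one_sub_pow_le {n s : ℕ} (hs : 0 < s) (hsn : s < n) {p : ℝ≥0∞}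
    (hp : p ≤ 1) :
    p ^ s * (1 - p) ^ (n - s)
      ≤ ENNReal.ofReal (((s : ℝ) / n) ^ s * (1 - (s : ℝ) / n) ^ (n - s)) := by
  have hp' : p ≠ ⊤ := ne_top_of_le_ne_top one_ne_top hp
  rw [← ENNReal.ofReal_toReal (a := p ^ s * (1 - p) ^ (n - s)) (by finiteness)]
  refine ENNReal.ofReal_le_ofReal ?_
  rw [toReal_mul, toReal_pow, toReal_pow, toReal_sub_of_le hp one_ne_top, toReal_one]
  exact _root_.pow_mul_one_sub_pow_le hs hsn toReal_nonneg
    (toReal_le_of_le_ofReal zero_le_one (by simpa))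

section Probability

variable {Ω ι : Type*} [MeasurableSpace Ω] [Fintype ι] {X : ι → Ω → ℝ}

theorem measurable_countLE (hX : ∀ i, Measurable (X i)) (t : ℝ) :
    Measurable fun ω => countLE (fun i => X i ω) t := by
  simp only [countLE, Finset.card_filter]
  exact Finset.measurable_sum _ fun i _ =>
    Measurable.ite (measurableSet_le (hX i) measurable_const) measurable_const measurable_const

theorem measure_iInter_preimage_ite_Iic_Ioi [DecidableEq ι] (P : Measure Ω)
    [IsProbabilityMeasure P] (hX : ∀ i, Measurable (X i)) (hindep : iIndepFun X P) {t : ℝ}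
    {p : ℝ≥0∞} (hp : ∀ i, P (X i ⁻¹' Set.Iic t) = p) (A : Finset ι) :
    P (⋂ i, X i ⁻¹' (if i ∈ A then Set.Iic t else Set.Ioi t))
      = p ^ A.card * (1 - p) ^ (Fintype.card ι - A.card) := by
  have hcompl : ∀ i, P (X i ⁻¹' Set.Ioi t) = 1 - p := fun i => by
    rw [← Set.compl_Iic, Set.preimage_compl, prob_compl_eq_one_sub (hX i measurableSet_Iic), hp]
  rw [hindep.meas_iInter fun i =>
    ⟨_, by split_ifs <;> [exact measurableSet_Iic; exact measurableSet_Ioi], rfl⟩]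
  have hfactor : ∀ i, P (X i ⁻¹' (if i ∈ A then Set.Iic t else Set.Ioi t))
      = if i ∈ A then p else 1 - p :=
    fun i => by split_ifs <;> simp [hp, hcompl]
  simp_rw [hfactor]
  rw [Finset.prod_ite, Finset.prod_const, Finset.prod_const, Finset.filter_univ_mem,
    Finset.filter_not, Finset.filter_univ_mem, ← Finset.compl_eq_univ_sdiff, Finset.card_compl]

theorem measure_countLE_eq_le (P : Measure Ω) [IsProbabilityMeasure P]
    (hX : ∀ i, Measurable (X i)) (hindep : iIndepFun X P) {t : ℝ} {p : ℝ≥0∞}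
    (hp : ∀ i, P (X i ⁻¹' Set.Iic t) = p) (s : ℕ) :
    P {ω | countLE (fun i => X i ω) t = s}
      ≤ (Fintype.card ι).choose s * p ^ s * (1 - p) ^ (Fintype.card ι - s) := by
  classical
  calc P {ω | countLE (fun i => X i ω) t = s}
      ≤ P (⋃ A ∈ Finset.univ.powersetCard s,
          ⋂ i, X i ⁻¹' (if i ∈ A then Set.Iic t else Set.Ioi t)) := by
        refine measure_mono fun ω hω =>
          Set.mem_biUnion (x := Finset.univ.filter fun i => X i ω ≤ t)
            (Finset.mem_powersetCard.2 ⟨Finset.filter_subset _ _, hω⟩)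
            (Set.mem_iInter.2 fun i => ?_)
        by_cases hi : X i ω ≤ t <;> simp [hi, not_le.1]
    _ ≤ ∑ A ∈ Finset.univ.powersetCard s,
          P (⋂ i, X i ⁻¹' (if i ∈ A then Set.Iic t else Set.Ioi t)) :=
        measure_biUnion_finset_le _ _
    _ = _ := by
        rw [Finset.sum_congr rfl fun A hA => (Finset.mem_powersetCard.1 hA).2 ▸
            measure_iInter_preimage_ite_Iic_Ioi P hX hindep hp A,
          Finset.sum_const, Finset.card_powersetCard, Finset.card_univ, nsmul_eq_mul, mul_assoc]

theorem lintegral_volume_Ico_eq (P : Measure Ω) [SFinite P] {f g : Ω → ℝ} (hf : Measurable f)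
    (hg : Measurable g) :
    ∫⁻ ω, volume (Set.Ico (f ω) (g ω)) ∂P
      = ∫⁻ t, P {ω | t ∈ Set.Ico (f ω) (g ω)} := by
  have hR : MeasurableSet {q : Ω × ℝ | q.2 ∈ Set.Ico (f q.1) (g q.1)} :=
    (measurableSet_le (hf.comp measurable_fst) measurable_snd).inter
      (measurableSet_lt measurable_snd (hg.comp measurable_fst))
  exact (Measure.prod_apply hR).symm.trans (Measure.prod_apply_symm hR)

theorem integral_sub_le_of_measure_mem_Ico_le (P : Measure Ω) [SFinite P] {f g : Ω → ℝ}
    (hf : Measurable f) (hg : Measurable g) (hfg : ∀ ω, f ω ≤ g ω) {a b M : ℝ}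
    (ha : ∀ ω, a ≤ f ω) (hb : ∀ ω, g ω ≤ b) (hab : a ≤ b) (hM : 0 ≤ M)
    (hP : ∀ t, P {ω | t ∈ Set.Ico (f ω) (g ω)} ≤ ENNReal.ofReal M) :
    ∫ ω, g ω - f ω ∂P ≤ M * (b - a) := by
  rw [integral_eq_lintegral_of_nonneg_ae (ae_of_all _ fun ω => sub_nonneg.2 (hfg ω))
    (hg.sub hf).aestronglyMeasurable]
  refine ENNReal.toReal_le_of_le_ofReal (mul_nonneg hM (sub_nonneg.2 hab)) ?_
  have hsupp : ∀ t ∉ Set.Ico a b, {ω | t ∈ Set.Ico (f ω) (g ω)} = ∅ := fun t ht =>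
    Set.eq_empty_of_forall_notMem fun ω hω => ht ⟨(ha ω).trans hω.1, hω.2.trans_le (hb ω)⟩
  calc ∫⁻ ω, ENNReal.ofReal (g ω - f ω) ∂P
        = ∫⁻ t, P {ω | t ∈ Set.Ico (f ω) (g ω)} := by
        simp_rw [← Real.volume_Ico]
        exact lintegral_volume_Ico_eq P hf hg
    _ ≤ ∫⁻ t, (Set.Ico a b).indicator (fun _ => ENNReal.ofReal M) t := by
        refine lintegral_mono fun t => ?_
        by_cases ht : t ∈ Set.Ico a b
        · simpa [ht] using hP t
        · rw [Set.indicator_of_notMem ht, hsupp t ht, measure_empty]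
    _ = ENNReal.ofReal (M * (b - a)) := by
        rw [lintegral_indicator_const measurableSet_Ico, Real.volume_Ico, ENNReal.ofReal_mul hM]

theorem measurable_orderStat {n : ℕ} {X : Fin n → Ω → ℝ} (hX : ∀ i, Measurable (X i))
    {k : ℕ} (hk1 : 1 ≤ k) (hkn : k ≤ n) :
    Measurable fun ω => orderStat (fun i => X i ω) k :=
  measurable_of_Iic fun t => by
    simp_rw [Set.preimage, Set.mem_Iic, orderStat_le_iff _ hk1 hkn]
    exact measurableSet_le measurable_const (measurable_countLE hX t)

end Probability

/-- If `X_1, …, X_n` are i.i.d. random variables supported on `[0,1]` and `1 ≤ s ≤ n-1`,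
then the expected gap between the `(s+1)`-th and `s`-th order statistics is at most
`C(n,s) (s/n)^s (1-s/n)^{n-s}`. -/
theorem stmt0 {Ω : Type*} [MeasurableSpace Ω] (P : Measure Ω) [IsProbabilityMeasure P]
    (n s : ℕ) (hs1 : 1 ≤ s) (hsn : s ≤ n - 1)
    (X : Fin n → Ω → ℝ) (hmeas : ∀ i, Measurable (X i))
    (hindep : iIndepFun X P)
    (μ : Measure ℝ) (hident : ∀ i, Measure.map (X i) P = μ)
    (hrange : ∀ i ω, X i ω ∈ Set.Icc (0 : ℝ) 1) :
    ∫ ω, (orderStat (fun i => X i ω) (s + 1) - orderStat (fun i => X i ω) s) ∂P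
      ≤ (n.choose s : ℝ) * ((s : ℝ) / n) ^ s * (1 - (s : ℝ) / n) ^ (n - s) := by
  have hsn' : s + 1 ≤ n := by omega
  have hY : ∀ k, 1 ≤ k → k ≤ n → ∀ ω,
      orderStat (fun i => X i ω) k ∈ Set.Icc (0 : ℝ) 1 :=
    fun k hk1 hkn ω => by
      obtain ⟨i, hi⟩ := orderStat_mem_range (fun i => X i ω) hk1 hkn
      exact hi ▸ hrange i ω
  have hF : ∀ t i, P (X i ⁻¹' Set.Iic t) = μ (Set.Iic t) := fun t i => by
    rw [← hident i, Measure.map_apply (hmeas i) measurableSet_Iic]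
  have hmax : 0 ≤ ((s : ℝ) / n) ^ s * (1 - (s : ℝ) / n) ^ (n - s) := by
    have hsn_real : (s : ℝ) ≤ n := by exact_mod_cast (by omega : s ≤ n)
    have : (s : ℝ) / n ≤ 1 := div_le_one_of_le₀ hsn_real (Nat.cast_nonneg _)
    exact mul_nonneg (by positivity) (pow_nonneg (sub_nonneg.2 this) _)
  refine (integral_sub_le_of_measure_mem_Ico_le P (measurable_orderStat hmeas hs1 (by omega))
    (measurable_orderStat hmeas (by omega) hsn')
    (fun ω => orderStat_le_orderStat_succ _ hs1 hsn') (fun ω => (hY s hs1 (by omega) ω).1)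
    (fun ω => (hY (s + 1) (by omega) hsn' ω).2) zero_le_one
    (M := n.choose s * (((s : ℝ) / n) ^ s * (1 - (s : ℝ) / n) ^ (n - s))) (by positivity)
    fun t => ?_).trans_eq (by ring)
  simp_rw [← countLE_eq_iff _ hs1 hsn']
  calc P {ω | countLE (fun i => X i ω) t = s}
      ≤ n.choose s * μ (Set.Iic t) ^ s * (1 - μ (Set.Iic t)) ^ (n - s) := by
        simpa using measure_countLE_eq_le P hmeas hindep (hF t) s
    _ ≤ _ := by
        rw [mul_assoc, ENNReal.ofReal_mul (by positivity), ENNReal.ofReal_natCast]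
        gcongr
        exact ENNReal.pow_mul_one_sub_pow_le hs1 (by omega) (hF t ⟨0, by omega⟩ ▸ prob_le_one)
end

section
/- Let A and B be i.i.d. real random variables with finite mean μ and finite variance σ². Then E[|A - B|] ≤ sqrt(4σ²/3). -/
open MeasureTheory ProbabilityTheory

/-!
Let `h a = E sign (a - B) = P(B < a) - P(B > a)`. Since
`|a - b| = (a - μ) sign (a - b) + (b - μ) sign (b - a)`, exchangeability of `(A, B)` gives
`E|A - B| = 2 E[(A - μ) h A]`, which Cauchy–Schwarz bounds by `2 σ (E[h(A)²])^(1/2)`.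
For a third independent copy `C`, `E[h(A)²] = E[sign (A - B) sign (A - C)]`; this is invariant
under cyclic relabelling of `(A, B, C)`, and for any three reals the cyclic sum of
`sign (x - y) sign (x - z)` is at most `1`, so `E[h(A)²] ≤ 1/3`.
-/

namespace Real

@[fun_prop]
lemma measurable_sign : Measurable Real.sign :=
  Measurable.ite (measurableSet_lt measurable_id measurable_const) measurable_const <|
    Measurable.ite (measurableSet_lt measurable_const measurable_id) measurable_const
      measurable_const

lemma abs_sign_le_one (x : ℝ) : |sign x| ≤ 1 := by
  rcases sign_apply_eq x with h | h | h <;> simp [h]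

lemma self_mul_sign (x : ℝ) : x * sign x = |x| := by
  rcases lt_trichotomy x 0 with h | rfl | h
  · simp [sign_of_neg h, abs_of_neg h]
  · simp
  · simp [sign_of_pos h, abs_of_pos h]

lemma abs_sign_mul_sign_le_one (x y : ℝ) : |sign x * sign y| ≤ 1 := by
  rw [abs_mul]
  exact mul_le_one₀ (abs_sign_le_one x) (abs_nonneg _) (abs_sign_le_one y)

/-- For distinct points the two extreme ones contribute `1` each and the middle one `-1`. -/
lemma sign_sub_mul_sign_sub_add_add_le_one (a b c : ℝ) :
    sign (a - b) * sign (a - c) + sign (b - c) * sign (b - a) + sign (c - a) * sign (c - b)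
      ≤ 1 := by
  rcases lt_trichotomy a b with hab | hab | hab <;>
  rcases lt_trichotomy b c with hbc | hbc | hbc <;>
  rcases lt_trichotomy a c with hac | hac | hac <;>
  simp [sign_of_neg, sign_of_pos, sub_neg, sub_pos, *] <;> norm_num

end Real

lemma integral_prod_prod_rotate {α E : Type*} [MeasurableSpace α] [NormedAddCommGroup E]
    [NormedSpace ℝ E] (ν : Measure α) [SFinite ν] (f : α × α × α → E) :
    ∫ p, f (p.2.2, p.1, p.2.1) ∂(ν.prod (ν.prod ν)) = ∫ p, f p ∂(ν.prod (ν.prod ν)) :=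
  (Measure.measurePreserving_swap.comp
    ((measurePreserving_prodAssoc ν ν ν).symm _)).integral_comp'
    (f := MeasurableEquiv.prodAssoc.symm.trans MeasurableEquiv.prodComm) f

lemma integral_mul_le_sqrt_mul_sqrt {α : Type*} [MeasurableSpace α] {μ : Measure α}
    {f g : α → ℝ} (hf : MemLp f 2 μ) (hg : MemLp g 2 μ) :
    ∫ x, f x * g x ∂μ ≤ √(∫ x, f x ^ 2 ∂μ) * √(∫ x, g x ^ 2 ∂μ) := by
  have h2 : ENNReal.ofReal 2 = 2 := ENNReal.ofReal_ofNat 2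
  calc ∫ x, f x * g x ∂μ ≤ ∫ x, |f x| * |g x| ∂μ :=
        integral_mono (hf.integrable_mul hg) (hf.abs.integrable_mul hg.abs)
          fun x => (le_abs_self _).trans_eq (abs_mul _ _)
    _ ≤ (∫ x, |f x| ^ (2 : ℝ) ∂μ) ^ (1 / (2 : ℝ)) *
          (∫ x, |g x| ^ (2 : ℝ) ∂μ) ^ (1 / (2 : ℝ)) :=
        integral_mul_le_Lp_mul_Lq_of_nonneg Real.HolderConjugate.two_two
          (.of_forall fun x => abs_nonneg _) (.of_forall fun x => abs_nonneg _)
          (h2 ▸ hf.abs) (h2 ▸ hg.abs)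
    _ = √(∫ x, f x ^ 2 ∂μ) * √(∫ x, g x ^ 2 ∂μ) := by
        simp only [Real.rpow_two, sq_abs, Real.sqrt_eq_rpow]

noncomputable def signMean (ν : Measure ℝ) (a : ℝ) : ℝ := ∫ b, Real.sign (a - b) ∂ν

section SignMean

variable {ν : Measure ℝ}

lemma measurable_signMean [SFinite ν] : Measurable (signMean ν) :=
  (Real.measurable_sign.comp (measurable_fst.sub measurable_snd)).stronglyMeasurable
    |>.integral_prod_right' (ν := ν) |>.measurable

lemma abs_signMean_le_one [IsProbabilityMeasure ν] (a : ℝ) : |signMean ν a| ≤ 1 := by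
  simpa [signMean] using norm_integral_le_of_norm_le_const (μ := ν)
    (f := fun b => Real.sign (a - b)) (C := 1) (.of_forall fun b => Real.abs_sign_le_one (a - b))

lemma integral_signMean_sq_le [IsProbabilityMeasure ν] :
    ∫ a, signMean ν a ^ 2 ∂ν ≤ 1 / 3 := by
  let g : ℝ × ℝ × ℝ → ℝ := fun p => Real.sign (p.1 - p.2.1) * Real.sign (p.1 - p.2.2)
  let rot : ℝ × ℝ × ℝ → ℝ × ℝ × ℝ := fun p => (p.2.2, p.1, p.2.1)
  have hg_comp {q : ℝ × ℝ × ℝ → ℝ × ℝ × ℝ} (hq : Measurable q) :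
      Integrable (fun p => g (q p)) (ν.prod (ν.prod ν)) :=
    .of_bound (by unfold g; fun_prop) 1 (.of_forall fun p => Real.abs_sign_mul_sign_le_one _ _)
  have hrot : Measurable rot := by fun_prop
  have hg : Integrable g (ν.prod (ν.prod ν)) := hg_comp measurable_id
  have hg_rot : Integrable (fun p => g (rot p)) (ν.prod (ν.prod ν)) := hg_comp hrot
  have hg_rot2 : Integrable (fun p => g (rot (rot p))) (ν.prod (ν.prod ν)) :=
    hg_comp (hrot.comp hrot)
  have h_sq : ∫ a, signMean ν a ^ 2 ∂ν = ∫ p, g p ∂(ν.prod (ν.prod ν)) := by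
    rw [integral_prod _ hg]
    refine integral_congr_ae (.of_forall fun a => ?_)
    simp only [g, signMean, sq]
    exact (integral_prod_mul (fun b => Real.sign (a - b)) (fun c => Real.sign (a - c))).symm
  have h_rot : ∫ p, g (rot p) ∂(ν.prod (ν.prod ν)) = ∫ p, g p ∂(ν.prod (ν.prod ν)) :=
    integral_prod_prod_rotate ν g
  have h_rot2 :
      ∫ p, g (rot (rot p)) ∂(ν.prod (ν.prod ν)) = ∫ p, g p ∂(ν.prod (ν.prod ν)) :=
    (integral_prod_prod_rotate ν (g ∘ rot)).trans h_rot
  have h_sum : ∫ p, (g p + g (rot (rot p)) + g (rot p)) ∂(ν.prod (ν.prod ν)) ≤ 1 := by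
    refine (integral_mono ((hg.add hg_rot2).add hg_rot) (integrable_const 1)
      fun p => ?_).trans_eq (by simp)
    exact Real.sign_sub_mul_sign_sub_add_add_le_one p.1 p.2.1 p.2.2
  rw [integral_add (f := fun p => g p + g (rot (rot p))) (hg.add hg_rot2) hg_rot,
    integral_add hg hg_rot2] at h_sum
  linarith

lemma integral_abs_sub_eq_two_mul_integral_mul_signMean [IsProbabilityMeasure ν] (c : ℝ)
    (h_int : Integrable (fun x => x - c) ν) :
    ∫ p, |p.1 - p.2| ∂(ν.prod ν) = 2 * ∫ a, (a - c) * signMean ν a ∂ν := by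
  let f : ℝ × ℝ → ℝ := fun p => (p.1 - c) * Real.sign (p.1 - p.2)
  have hf : Integrable f (ν.prod ν) := by
    refine (h_int.comp_fst ν).norm.mono' (by fun_prop) (.of_forall fun p => ?_)
    rw [Real.norm_eq_abs, Real.norm_eq_abs, abs_mul]
    exact mul_le_of_le_one_right (abs_nonneg _) (Real.abs_sign_le_one _)
  have hf_swap : Integrable (fun p => f p.swap) (ν.prod ν) := hf.swap
  have h_split (p : ℝ × ℝ) : |p.1 - p.2| = f p + f p.swap := by
    change _ = (p.1 - c) * Real.sign (p.1 - p.2) + (p.2 - c) * Real.sign (p.2 - p.1)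
    rw [← Real.self_mul_sign, show p.2 - p.1 = -(p.1 - p.2) by ring, Real.sign_neg]
    ring
  have h_fst : ∫ p, f p ∂(ν.prod ν) = ∫ a, (a - c) * signMean ν a ∂ν := by
    rw [integral_prod _ hf]
    exact integral_congr_ae <| .of_forall fun a =>
      integral_const_mul (a - c) fun b => Real.sign (a - b)
  simp_rw [h_split]
  rw [integral_add hf hf_swap, integral_prod_swap f, h_fst]
  ring

lemma integral_abs_sub_le_sqrt [IsProbabilityMeasure ν] (c : ℝ)
    (h_sq : Integrable (fun x => (x - c) ^ 2) ν) :
    ∫ p, |p.1 - p.2| ∂(ν.prod ν) ≤ √(4 * (∫ x, (x - c) ^ 2 ∂ν) / 3) := by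
  set V := ∫ x, (x - c) ^ 2 ∂ν
  have h_memLp : MemLp (fun x => x - c) 2 ν :=
    (memLp_two_iff_integrable_sq (by fun_prop)).2 h_sq
  have h_signMean : MemLp (signMean ν) 2 ν :=
    .of_bound measurable_signMean.aestronglyMeasurable 1 (.of_forall abs_signMean_le_one)
  rw [integral_abs_sub_eq_two_mul_integral_mul_signMean c (h_memLp.integrable one_le_two)]
  calc 2 * ∫ a, (a - c) * signMean ν a ∂ν
      ≤ 2 * (√V * √(∫ a, signMean ν a ^ 2 ∂ν)) := by
        gcongr; exact integral_mul_le_sqrt_mul_sqrt h_memLp h_signMean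
    _ ≤ 2 * (√V * √(1 / 3)) := by
        gcongr; exact integral_signMean_sq_le
    _ = √(4 * V / 3) := by
        rw [show 4 * V / 3 = 2 ^ 2 * (V * (1 / 3)) by ring, Real.sqrt_mul (by positivity),
          Real.sqrt_sq zero_le_two, Real.sqrt_mul (integral_nonneg fun x => sq_nonneg _)]

end SignMean

theorem stmt3_general {Ω : Type*} [MeasurableSpace Ω] (P : Measure Ω) [IsProbabilityMeasure P]
    (A B : Ω → ℝ) (hA : Measurable A) (hB : Measurable B)
    (hindep : IndepFun A B P)
    (hident : Measure.map A P = Measure.map B P)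
    (μ σ2 : ℝ)
    (hintA2 : Integrable (fun ω => (A ω - μ) ^ 2) P)
    (hvar : ∫ ω, (A ω - μ) ^ 2 ∂P = σ2) :
    ∫ ω, |A ω - B ω| ∂P ≤ Real.sqrt (4 * σ2 / 3) := by
  set ν := P.map A
  have : IsProbabilityMeasure ν := Measure.isProbabilityMeasure_map hA.aemeasurable
  have h_joint : P.map (fun ω => (A ω, B ω)) = ν.prod ν := by
    rw [(indepFun_iff_map_prod_eq_prod_map_map hA.aemeasurable hB.aemeasurable).1 hindep,
      ← hident]
  have h_sq_meas : AEStronglyMeasurable (fun x : ℝ => (x - μ) ^ 2) ν := by fun_prop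
  have h_abs : ∫ ω, |A ω - B ω| ∂P = ∫ p, |p.1 - p.2| ∂(ν.prod ν) := by
    rw [← h_joint, integral_map (hA.prodMk hB).aemeasurable (by fun_prop)]
  rw [h_abs, ← hvar, ← integral_map hA.aemeasurable h_sq_meas]
  exact integral_abs_sub_le_sqrt μ ((integrable_map_measure h_sq_meas hA.aemeasurable).2 hintA2)

/-- If `A` and `B` are i.i.d. real random variables with mean `μ` and variance `σ²`,
then `E|A - B| ≤ sqrt(4σ²/3)`. -/
theorem stmt3 {Ω : Type*} [MeasurableSpace Ω] (P : Measure Ω) [IsProbabilityMeasure P]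
    (A B : Ω → ℝ) (hA : Measurable A) (hB : Measurable B)
    (hindep : IndepFun A B P)
    (hident : Measure.map A P = Measure.map B P)
    (μ σ2 : ℝ)
    (hintA : Integrable A P) (hintA2 : Integrable (fun ω => (A ω - μ) ^ 2) P)
    (hmean : ∫ ω, A ω ∂P = μ)
    (hvar : ∫ ω, (A ω - μ) ^ 2 ∂P = σ2) :
    ∫ ω, |A ω - B ω| ∂P ≤ Real.sqrt (4 * σ2 / 3) :=
  stmt3_general P A B hA hB hindep hident μ σ2 hintA2 hvar
end

section
/- Let X_1,...,X_n be i.i.d. random variables with a distribution having a monotone (nondecreasing) hazard rate. Then for every r in [n], the r-th order statistic of X_1,...,X_n also has a monotone nondecreasing hazard rate. -/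
/-!
Cross-multiplying, monotonicity of `g / (1 - G)` amounts to comparing the numerator at `x` with
each summand of the survival function at `y` and vice versa. Writing `a = F x ≤ b = F y`,
`u = 1 - a ≥ v = 1 - b` and `j + k = r - 1` for the `j`-th summand, both sides factor as a common
term times `(f x · v) · (a v)^k` resp. `(f y · u) · (b u)^k`, and the hazard-rate hypothesis is
exactly `f x · v ≤ f y · u`.
-/

open Finset

theorem div_sum_le_div_sum_of_forall_mul_le {ι : Type*} {s : Finset ι} {a b : ℝ} {u v : ι → ℝ}
    (hu : 0 < ∑ i ∈ s, u i) (hv : 0 < ∑ i ∈ s, v i) (h : ∀ i ∈ s, a * v i ≤ b * u i) :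
    a / ∑ i ∈ s, u i ≤ b / ∑ i ∈ s, v i := by
  rw [div_le_div_iff₀ hu hv, mul_sum, mul_sum]
  exact sum_le_sum h

theorem sum_choose_mul_pow_mul_one_sub_pow_pos {t : ℝ} (ht0 : 0 ≤ t) (ht1 : t < 1) {n r : ℕ}
    (hr : 1 ≤ r) :
    0 < ∑ j ∈ range r, (n.choose j : ℝ) * t ^ j * (1 - t) ^ (n - j) := by
  have ht : 0 < 1 - t := sub_pos.2 ht1
  refine sum_pos' (fun j _ => by positivity) ⟨0, mem_range.2 hr, ?_⟩
  simpa using pow_pos ht n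

theorem order_statistic_cross_term_le {a b p q c d : ℝ} {n r j : ℕ} (ha : 0 ≤ a) (hab : a ≤ b)
    (hb : b ≤ 1) (hq : 0 ≤ q) (hc : 0 ≤ c) (hd : 0 ≤ d)
    (hpq : p * (1 - b) ≤ q * (1 - a)) (hjr : j < r) (hrn : r ≤ n) :
    c * p * a ^ (r - 1) * (1 - a) ^ (n - r) * (d * b ^ j * (1 - b) ^ (n - j)) ≤
      c * q * b ^ (r - 1) * (1 - b) ^ (n - r) * (d * a ^ j * (1 - a) ^ (n - j)) := by
  obtain ⟨k, hk, hnj⟩ : ∃ k, r - 1 = j + k ∧ n - j = n - r + k + 1 :=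
    ⟨r - 1 - j, by omega, by omega⟩
  rw [hk, hnj]
  have hb0 : 0 ≤ b := ha.trans hab
  have hu : 0 ≤ 1 - a := by linarith
  have hv : 0 ≤ 1 - b := sub_nonneg.2 hb
  have hav : a * (1 - b) ≤ b * (1 - a) := mul_le_mul hab (by linarith) hv hb0
  -- `ring` must see `1 - a` and `1 - b` as atoms to regroup `(b * (1 - a)) ^ k`
  generalize 1 - a = u at *
  generalize 1 - b = v at *
  calc c * p * a ^ (j + k) * u ^ (n - r) * (d * b ^ j * v ^ (n - r + k + 1))
      = c * d * (p * v) * (a * b) ^ j * (a * v) ^ k * (u * v) ^ (n - r) := by ring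
    _ ≤ c * d * (q * u) * (a * b) ^ j * (b * u) ^ k * (u * v) ^ (n - r) := by gcongr
    _ = c * q * b ^ (j + k) * v ^ (n - r) * (d * a ^ j * u ^ (n - r + k + 1)) := by ring

theorem stmt7_general (n r : ℕ) (hr1 : 1 ≤ r) (hrn : r ≤ n)
    (f F : ℝ → ℝ) (hf0 : ∀ x, 0 ≤ f x)
    (hFmono : Monotone F) (hF0 : ∀ x, 0 ≤ F x)
    (hMHR : MonotoneOn (fun x => f x / (1 - F x)) {x | F x < 1}) :
    MonotoneOn
      (fun x =>
        ((n.factorial : ℝ) / ((r - 1).factorial * (n - r).factorial)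
            * f x * F x ^ (r - 1) * (1 - F x) ^ (n - r))
          / (∑ j ∈ Finset.range r, (n.choose j : ℝ) * F x ^ j * (1 - F x) ^ (n - j)))
      {x | F x < 1} := by
  intro x hx y hy hxy
  have hx : F x < 1 := hx
  have hy : F y < 1 := hy
  have hazard : f x * (1 - F y) ≤ f y * (1 - F x) :=
    (div_le_div_iff₀ (sub_pos.2 hx) (sub_pos.2 hy)).1 (hMHR hx hy hxy)
  refine div_sum_le_div_sum_of_forall_mul_le
    (sum_choose_mul_pow_mul_one_sub_pow_pos (hF0 x) hx hr1)
    (sum_choose_mul_pow_mul_one_sub_pow_pos (hF0 y) hy hr1) fun j hj => ?_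
  exact order_statistic_cross_term_le (hF0 x) (hFmono hxy) hy.le (hf0 y)
    (by positivity) (Nat.cast_nonneg _) hazard (mem_range.1 hj) hrn

/-- If a distribution with density `f` and cdf `F` has monotone nondecreasing hazard rate, then
the `r`-th order statistic of `n` i.i.d. samples from it also has a monotone nondecreasing hazard
rate: `g/(1-G)` is nondecreasing, where `g` is the order-statistic density and `1-G` its
survival function. -/
theorem stmt7 (n r : ℕ) (hr1 : 1 ≤ r) (hrn : r ≤ n)
    (f F : ℝ → ℝ) (hf0 : ∀ x, 0 ≤ f x)
    (hFmono : Monotone F) (hF0 : ∀ x, 0 ≤ F x) (hF1 : ∀ x, F x ≤ 1)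
    (hMHR : MonotoneOn (fun x => f x / (1 - F x)) {x | F x < 1}) :
    MonotoneOn
      (fun x =>
        ((n.factorial : ℝ) / ((r - 1).factorial * (n - r).factorial)
            * f x * F x ^ (r - 1) * (1 - F x) ^ (n - r))
          / (∑ j ∈ Finset.range r, (n.choose j : ℝ) * F x ^ j * (1 - F x) ^ (n - j)))
      {x | F x < 1} :=
  stmt7_general n r hr1 hrn f F hf0 hFmono hF0 hMHR
end

section
/- Let g, h : ℝ → ℝ with g integrable, h nonnegative and nonincreasing, and suppose ∫_{-∞}^t g(x) dx ≤ 0 for all t ∈ ℝ. Then ∫_{-∞}^t g(x) h(x) dx ≤ 0 for all t ∈ ℝ. -/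
/-!
Layer-cake decomposition of the weight: `g h = ∫₀^∞ g · 1{s < h} ds`, so by Fubini
`∫_{Iic t} g h = ∫₀^∞ (∫_{Iic t ∩ {s < h}} g) ds`. Since `h` is nonincreasing, each
`Iic t ∩ {s < h}` is a lower set of `ℝ` bounded above, hence agrees with some `Iic u` up to at
most one point, and the inner integrals are `≤ 0` by hypothesis.
-/

open MeasureTheory Set

section LowerSet

variable {α : Type*} [ConditionallyCompleteLinearOrder α] [MeasurableSpace α]
  {μ : Measure α} [NullSingletonClass μ] {s : Set α}

theorem IsLowerSet.ae_eq_Iic_csSup (hs : IsLowerSet s) (hne : s.Nonempty) (hbdd : BddAbove s) :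
    s =ᵐ[μ] Iic (sSup s) := by
  have hsub : s ⊆ Iic (sSup s) := fun _ hx => le_csSup hbdd hx
  refine ae_eq_set.2 ⟨by rw [Set.sdiff_eq_empty.2 hsub, measure_empty], ?_⟩
  refine measure_mono_null (fun x ⟨hx, hxs⟩ => ?_) (measure_singleton (sSup s))
  refine (eq_or_lt_of_le hx).resolve_right fun hlt => hxs ?_
  obtain ⟨y, hy, hxy⟩ := exists_lt_of_lt_csSup hne hlt
  exact hs hxy.le hy

theorem setIntegral_nonpos_of_isLowerSet {g : α → ℝ}
    (hneg : ∀ t, ∫ x in Iic t, g x ∂μ ≤ 0) (hs : IsLowerSet s) (hbdd : BddAbove s) :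
    ∫ x in s, g x ∂μ ≤ 0 := by
  rcases s.eq_empty_or_nonempty with rfl | hne
  · simp
  · rw [setIntegral_congr_set (hs.ae_eq_Iic_csSup hne hbdd)]
    exact hneg _

end LowerSet

section LayerCake

variable {α : Type*} [MeasurableSpace α] {μ : Measure α} {f h : α → ℝ}

theorem integrable_indicator_Ioo_prod [SFinite μ] (hh : Measurable h) (h0 : ∀ x, 0 ≤ h x)
    (hfh : Integrable (fun x => f x * h x) μ) :
    Integrable (fun p : α × ℝ => (Ioo 0 (h p.1)).indicator (fun _ => f p.1) p.2)
      (μ.prod volume) := by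
  -- measurable although `f` need not be: `f = (f * h) / h` wherever the indicator is nonzero
  have h_eq : (fun p : α × ℝ => (Ioo 0 (h p.1)).indicator (fun _ => f p.1) p.2) =
      fun p => f p.1 * h p.1 * {p : α × ℝ | 0 < p.2 ∧ p.2 < h p.1}.indicator (h ·.1)⁻¹ p := by
    ext ⟨x, s⟩
    by_cases hs : 0 < s ∧ s < h x
    · simp [indicator_of_mem, hs, (hs.1.trans hs.2).ne']
    · simp [hs]
  have h_meas : Measurable ({p : α × ℝ | 0 < p.2 ∧ p.2 < h p.1}.indicator (h ·.1)⁻¹) :=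
    (hh.comp measurable_fst).inv.indicator
      ((measurableSet_lt measurable_const measurable_snd).inter
        (measurableSet_lt measurable_snd (hh.comp measurable_fst)))
  refine (integrable_prod_iff ?_).2 ⟨ae_of_all _ fun x => ?_, ?_⟩
  · rw [h_eq]
    exact hfh.1.comp_fst.mul h_meas.aestronglyMeasurable
  · exact (integrable_indicator_iff measurableSet_Ioo).2
      (integrableOn_const (measure_Ioo_lt_top (a := 0) (b := h x)).ne (C := f x))
  · refine hfh.norm.congr (ae_of_all _ fun x => ?_)
    simp only [norm_indicator_eq_indicator_norm]
    rw [integral_indicator_const _ measurableSet_Ioo, Real.volume_real_Ioo_of_le (h0 x),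
      smul_eq_mul, sub_zero, norm_mul, Real.norm_of_nonneg (h0 x), mul_comm]

theorem integral_mul_eq_integral_setIntegral_lt [SFinite μ] (hh : Measurable h)
    (h0 : ∀ x, 0 ≤ h x) (hfh : Integrable (fun x => f x * h x) μ) :
    ∫ x, f x * h x ∂μ = ∫ s in Ioi 0, ∫ x in {x | s < h x}, f x ∂μ := by
  have integral_Ioo (x : α) : ∫ s, (Ioo 0 (h x)).indicator (fun _ => f x) s = f x * h x := by
    rw [integral_indicator_const _ measurableSet_Ioo, Real.volume_real_Ioo_of_le (h0 x),
      smul_eq_mul, sub_zero, mul_comm]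
  have indicator_of_pos {s : ℝ} (hs : 0 < s) (x : α) :
      (Ioo 0 (h x)).indicator (fun _ => f x) s = {x | s < h x}.indicator f x := by
    by_cases hx : s < h x <;> simp [hx, hs]
  calc ∫ x, f x * h x ∂μ = ∫ x, (∫ s, (Ioo 0 (h x)).indicator (fun _ => f x) s) ∂μ := by
        simp only [integral_Ioo]
    _ = ∫ s, ∫ x, (Ioo 0 (h x)).indicator (fun _ => f x) s ∂μ :=
        integral_integral_swap (integrable_indicator_Ioo_prod hh h0 hfh)
    _ = ∫ s in Ioi 0, ∫ x, (Ioo 0 (h x)).indicator (fun _ => f x) s ∂μ := by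
        refine (setIntegral_eq_integral_of_forall_compl_eq_zero fun s hs => ?_).symm
        exact integral_eq_zero_of_ae
          (ae_of_all _ fun x => indicator_of_notMem (fun hmem => hs hmem.1) _)
    _ = ∫ s in Ioi 0, ∫ x in {x | s < h x}, f x ∂μ := by
        refine setIntegral_congr_fun measurableSet_Ioi fun s hs => ?_
        simp only [indicator_of_pos hs]
        exact integral_indicator (measurableSet_lt measurable_const hh)

end LayerCake

theorem stmt12_general (g h : ℝ → ℝ)
    (hgh : Integrable (fun x => g x * h x))
    (hh0 : ∀ x, 0 ≤ h x) (hhanti : Antitone h)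
    (hneg : ∀ t : ℝ, ∫ x in Set.Iic t, g x ≤ 0) :
    ∀ t : ℝ, ∫ x in Set.Iic t, g x * h x ≤ 0 := by
  intro t
  rw [integral_mul_eq_integral_setIntegral_lt hhanti.measurable hh0 hgh.restrict]
  refine integral_nonpos fun s => ?_
  have superlevel_isLowerSet : IsLowerSet {x | s < h x} :=
    isLowerSet_setOfPred.2 fun _ _ hxy => (hhanti hxy).trans_lt'
  rw [Measure.restrict_restrict (measurableSet_lt measurable_const hhanti.measurable)]
  exact setIntegral_nonpos_of_isLowerSet hneg (superlevel_isLowerSet.inter (isLowerSet_Iic t))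
    ⟨t, fun _ hx => hx.2⟩

/-- Barlow–Proschan lemma: if `g` is integrable with `∫_{-∞}^t g ≤ 0` for all `t`, and `h` is
nonnegative and nonincreasing (with `g·h` integrable), then `∫_{-∞}^t g·h ≤ 0` for all `t`. -/
theorem stmt12 (g h : ℝ → ℝ)
    (hg : Integrable g) (hgh : Integrable (fun x => g x * h x))
    (hh0 : ∀ x, 0 ≤ h x) (hhanti : Antitone h)
    (hneg : ∀ t : ℝ, ∫ x in Set.Iic t, g x ≤ 0) :
    ∀ t : ℝ, ∫ x in Set.Iic t, g x * h x ≤ 0 :=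
  stmt12_general g h hgh hh0 hhanti hneg
end

section
/- Let ν be a product probability measure on ℝ^n and let f, g : ℝ^n → [0,1] both be monotone nondecreasing (in the coordinatewise partial order). Then E_ν[f·g] ≥ E_ν[f]·E_ν[g]. The same conclusion holds if both f and g are monotone nonincreasing. -/
/-!
Induct on the number of coordinates. For a single coordinate, or more generally for two
functions that vary together (`Monovary`), this is Chebyshev's integral inequality: integrate
`(f x - f y) * (g x - g y) ≥ 0` over `μ ⊗ μ`. For a product `μ ⊗ π`, freeze the first coordinate
`x`: the sections `f (x, ·)`, `g (x, ·)` are monotone, so the inequality for `π` bounds the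
product of the marginals `F x = ∫ f (x, y) dπ`, `G x = ∫ g (x, y) dπ` by `∫ f g (x, y) dπ`; the
marginals are monotone again, so the inequality for `μ` applies to them. Nonincreasing
functions are handled by passing to `-f`, `-g`.
-/

open MeasureTheory

theorem integral_mul_integral_le_integral_mul_of_monovary {α : Type*} [MeasurableSpace α]
    {μ : Measure α} [IsProbabilityMeasure μ] {f g : α → ℝ} (hf : Integrable f μ)
    (hg : Integrable g μ) (hfg : Integrable (fun x => f x * g x) μ) (hm : Monovary f g) :
    (∫ x, f x ∂μ) * ∫ x, g x ∂μ ≤ ∫ x, f x * g x ∂μ := by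
  have inner (x : α) : ∫ y, (f x - f y) * (g x - g y) ∂μ
      = f x * g x - f x * ∫ y, g y ∂μ - g x * ∫ y, f y ∂μ + ∫ y, f y * g y ∂μ := by
    simp_rw [sub_mul, mul_sub]
    rw [integral_sub, integral_sub, integral_sub, integral_const, integral_const_mul,
      integral_mul_const]
    · simp only [probReal_univ, smul_eq_mul, one_mul]
      ring
    all_goals fun_prop
  have h : 0 ≤ ∫ x, ∫ y, (f x - f y) * (g x - g y) ∂μ ∂μ :=
    integral_nonneg fun x => integral_nonneg fun y => hm.sub_mul_sub_nonneg y x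
  simp_rw [inner] at h
  rw [integral_add, integral_sub, integral_sub, integral_mul_const, integral_mul_const,
    integral_const] at h
  · simp only [probReal_univ, smul_eq_mul, one_mul] at h
    linarith
  all_goals fun_prop

lemma norm_mul_le_one {α : Type*} {f g : α → ℝ} (hf : ∀ x, ‖f x‖ ≤ 1) (hg : ∀ x, ‖g x‖ ≤ 1)
    (x : α) : ‖f x * g x‖ ≤ 1 := by
  rw [norm_mul]
  exact mul_le_one₀ (hf x) (norm_nonneg _) (hg x)

lemma Measurable.integrable_of_norm_le {α : Type*} [MeasurableSpace α] {μ : Measure α}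
    [IsFiniteMeasure μ] {f : α → ℝ} (hf : Measurable f) {C : ℝ} (hC : ∀ x, ‖f x‖ ≤ C) :
    Integrable f μ :=
  .of_bound hf.aestronglyMeasurable C (ae_of_all _ hC)

/-- Both functions are normalised to be bounded by `1`; this loses nothing, since the inequality
is invariant under scaling `f` and `g`. -/
def HasHarrisInequality {α : Type*} [MeasurableSpace α] [Preorder α] (μ : Measure α) : Prop :=
  ∀ f g : α → ℝ, Measurable f → Measurable g → (∀ x, ‖f x‖ ≤ 1) → (∀ x, ‖g x‖ ≤ 1) →
    Monotone f → Monotone g → (∫ x, f x ∂μ) * ∫ x, g x ∂μ ≤ ∫ x, f x * g x ∂μ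

section Harris

variable {α β : Type*} [MeasurableSpace α] [MeasurableSpace β] [Preorder α] [Preorder β]

lemma hasHarrisInequality_of_forall_monovary (μ : Measure α) [IsProbabilityMeasure μ]
    (h : ∀ f g : α → ℝ, Monotone f → Monotone g → Monovary f g) : HasHarrisInequality μ :=
  fun f g hf hg hf1 hg1 hfm hgm =>
    integral_mul_integral_le_integral_mul_of_monovary (hf.integrable_of_norm_le hf1)
      (hg.integrable_of_norm_le hg1)
      ((hf.mul hg).integrable_of_norm_le (norm_mul_le_one hf1 hg1)) (h f g hfm hgm)

lemma hasHarrisInequality_of_subsingleton [Subsingleton α] (μ : Measure α)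
    [IsProbabilityMeasure μ] : HasHarrisInequality μ :=
  hasHarrisInequality_of_forall_monovary μ fun _ _ _ _ i j hij =>
    absurd hij (by rw [Subsingleton.elim i j]; exact lt_irrefl _)

variable {μ : Measure α}

theorem HasHarrisInequality.map (h : HasHarrisInequality μ) {e : α → β} (he : Measurable e)
    (hem : Monotone e) : HasHarrisInequality (μ.map e) := by
  intro f g hf hg hf1 hg1 hfm hgm
  rw [integral_map he.aemeasurable hf.aestronglyMeasurable,
    integral_map he.aemeasurable hg.aestronglyMeasurable,
    integral_map (f := fun x => f x * g x) he.aemeasurable (hf.mul hg).aestronglyMeasurable]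
  exact h _ _ (hf.comp he) (hg.comp he) (fun _ => hf1 _) (fun _ => hg1 _) (hfm.comp hem)
    (hgm.comp hem)

theorem HasHarrisInequality.of_antitone (h : HasHarrisInequality μ) {f g : α → ℝ}
    (hf : Measurable f) (hg : Measurable g) (hf1 : ∀ x, ‖f x‖ ≤ 1) (hg1 : ∀ x, ‖g x‖ ≤ 1)
    (hfa : Antitone f) (hga : Antitone g) :
    (∫ x, f x ∂μ) * ∫ x, g x ∂μ ≤ ∫ x, f x * g x ∂μ := by
  simpa [integral_neg] using h (-f) (-g) hf.neg hg.neg (by simpa) (by simpa) hfa.neg hga.neg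

section Marginal

variable {π : Measure β} [IsProbabilityMeasure π] {f : α × β → ℝ}

omit [MeasurableSpace α] [Preorder α] [Preorder β] in
lemma norm_integral_prod_right_le_one (hf1 : ∀ p, ‖f p‖ ≤ 1) (x : α) :
    ‖∫ y, f (x, y) ∂π‖ ≤ 1 :=
  (norm_integral_le_of_norm_le_const (ae_of_all _ fun y => hf1 (x, y))).trans (by simp)

lemma monotone_integral_prod_right (hf : Measurable f) (hf1 : ∀ p, ‖f p‖ ≤ 1)
    (hfm : Monotone f) : Monotone fun x => ∫ y, f (x, y) ∂π := fun x x' hx =>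
  integral_mono ((hf.comp measurable_prodMk_left).integrable_of_norm_le fun y => hf1 (x, y))
    ((hf.comp measurable_prodMk_left).integrable_of_norm_le fun y => hf1 (x', y))
    fun y => (monotone_prod_iff.1 hfm).2 y hx

end Marginal

theorem HasHarrisInequality.prod [IsProbabilityMeasure μ] {π : Measure β}
    [IsProbabilityMeasure π] (hμ : HasHarrisInequality μ) (hπ : HasHarrisInequality π) :
    HasHarrisInequality (μ.prod π) := by
  intro f g hf hg hf1 hg1 hfm hgm
  have hF := hf.stronglyMeasurable.integral_prod_right' (ν := π)
  have hG := hg.stronglyMeasurable.integral_prod_right' (ν := π)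
  have hfg : Integrable (fun p => f p * g p) (μ.prod π) :=
    (hf.mul hg).integrable_of_norm_le (norm_mul_le_one hf1 hg1)
  have marginal_le : (∫ x, ∫ y, f (x, y) ∂π ∂μ) * ∫ x, ∫ y, g (x, y) ∂π ∂μ
      ≤ ∫ x, (∫ y, f (x, y) ∂π) * ∫ y, g (x, y) ∂π ∂μ :=
    hμ _ _ hF.measurable hG.measurable (norm_integral_prod_right_le_one hf1)
      (norm_integral_prod_right_le_one hg1) (monotone_integral_prod_right hf hf1 hfm)
      (monotone_integral_prod_right hg hg1 hgm)
  have section_le (x : α) :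
      (∫ y, f (x, y) ∂π) * ∫ y, g (x, y) ∂π ≤ ∫ y, f (x, y) * g (x, y) ∂π :=
    hπ _ _ (hf.comp measurable_prodMk_left) (hg.comp measurable_prodMk_left) (fun _ => hf1 _)
      (fun _ => hg1 _) ((monotone_prod_iff.1 hfm).1 x) ((monotone_prod_iff.1 hgm).1 x)
  have hFG : Integrable (fun x => (∫ y, f (x, y) ∂π) * ∫ y, g (x, y) ∂π) μ :=
    (hF.measurable.mul hG.measurable).integrable_of_norm_le
      (norm_mul_le_one (norm_integral_prod_right_le_one hf1) (norm_integral_prod_right_le_one hg1))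
  rw [integral_prod f (hf.integrable_of_norm_le hf1), integral_prod g (hg.integrable_of_norm_le hg1),
    integral_prod (fun p => f p * g p) hfg]
  exact marginal_le.trans (integral_mono hFG hfg.integral_prod_left section_le)

end Harris

theorem hasHarrisInequality_of_linearOrder {α : Type*} [MeasurableSpace α] [LinearOrder α]
    (μ : Measure α) [IsProbabilityMeasure μ] : HasHarrisInequality μ :=
  hasHarrisInequality_of_forall_monovary μ fun _ _ hf hg => hf.monovary hg

theorem hasHarrisInequality_pi {n : ℕ} {α : Fin n → Type*} [∀ i, MeasurableSpace (α i)]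
    [∀ i, Preorder (α i)] (ν : ∀ i, Measure (α i)) [∀ i, IsProbabilityMeasure (ν i)]
    (h : ∀ i, HasHarrisInequality (ν i)) : HasHarrisInequality (Measure.pi ν) := by
  induction n with
  | zero => exact hasHarrisInequality_of_subsingleton _
  | succ n ih =>
    rw [← ((measurePreserving_piFinSuccAbove ν 0).symm _).map_eq]
    refine ((h 0).prod (ih _ fun i => h _)).map (MeasurableEquiv.measurable _) fun p q hpq => ?_
    simp only [MeasurableEquiv.piFinSuccAbove_symm_apply, Fin.insertNthEquiv_zero]
    exact Fin.cons_le_cons.2 hpq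

/-- FKG/Harris inequality for product measures: if `ν = ν₁ × ⋯ × νₙ` is a product probability
measure on `ℝⁿ` and `f, g : ℝⁿ → [0,1]` are both monotone nondecreasing (or both nonincreasing)
in the coordinatewise order, then `E[f g] ≥ E[f] E[g]`. -/
theorem stmt18 (n : ℕ) (ν : Fin n → Measure ℝ) [∀ i, IsProbabilityMeasure (ν i)]
    (f g : (Fin n → ℝ) → ℝ) (hfm : Measurable f) (hgm : Measurable g)
    (hf01 : ∀ x, f x ∈ Set.Icc (0 : ℝ) 1) (hg01 : ∀ x, g x ∈ Set.Icc (0 : ℝ) 1)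
    (hmono : (Monotone f ∧ Monotone g) ∨ (Antitone f ∧ Antitone g)) :
    ∫ x, f x * g x ∂Measure.pi ν
      ≥ (∫ x, f x ∂Measure.pi ν) * ∫ x, g x ∂Measure.pi ν := by
  have hν : HasHarrisInequality (Measure.pi ν) :=
    hasHarrisInequality_pi ν fun i => hasHarrisInequality_of_linearOrder (ν i)
  have norm_le_one {h : (Fin n → ℝ) → ℝ} (h01 : ∀ x, h x ∈ Set.Icc (0 : ℝ) 1) (x) :
      ‖h x‖ ≤ 1 := by
    rw [Real.norm_of_nonneg (h01 x).1]
    exact (h01 x).2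
  rcases hmono with ⟨hf, hg⟩ | ⟨hf, hg⟩
  · exact hν f g hfm hgm (norm_le_one hf01) (norm_le_one hg01) hf hg
  · exact hν.of_antitone hfm hgm (norm_le_one hf01) (norm_le_one hg01) hf hg
end
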